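/- arXiv:2203.05447 — 2 statements merged into one kernel-verified Lean document; each statement's English description precedes it below -/
import Mathlib

section
/- Let K be a distribution on ℝ³ and let f : ℝ³ × ℝ³ → ℂ. Let R be the linear map R(x,y) = ((x+y)/√2, (y-x)/√2), and let L₁ be an invertible lower block-triangular matrix such that (R L₁)⁻¹ has block form [[I, a],[0, b]]. Then for all x, y ∈ ℝ³, ((K ⊗ δ) * (f ∘ (R L₁)⁻¹))(R L₁ (x,y)) = ((K ⊗ δ) * f)(x,y), where (K ⊗ δ)(x,y) = K(x)δ(y) denotes the tensor product distribution and * denotes convolution on ℝ⁶. -/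
open MeasureTheory Complex Real
open scoped ENNReal

noncomputable section

abbrev E3 := EuclideanSpace ℝ (Fin 3)

/-- The rotation `R(x,y) = ((x+y)/√2, (y-x)/√2)`. -/
def Rrot (z : E3 × E3) : E3 × E3 :=
  (((Real.sqrt 2)⁻¹ : ℝ) • (z.1 + z.2), ((Real.sqrt 2)⁻¹ : ℝ) • (z.2 - z.1))

/-- Convolution of the tensor product kernel `K(x)δ(y)` with `f` on `ℝ⁶`:
`((K ⊗ δ) * f)(x,y) = ∫ K(x') f(x - x', y) dx'`. -/
def convKdelta (K : E3 → ℂ) (f : E3 × E3 → ℂ) (z : E3 × E3) : ℂ :=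
  ∫ x' : E3, K x' * f (z.1 - x', z.2)

/-- If `T = R ∘ L₁` with `L₁` an invertible lower block-triangular linear map
and `(R L₁)⁻¹` has block form `[[I, a],[0, b]]` (with `b` invertible), then
`((K ⊗ δ) * (f ∘ (R L₁)⁻¹))(R L₁ (x,y)) = ((K ⊗ δ) * f)(x,y)`. -/
theorem statement0 (K : E3 → ℂ) (f : E3 × E3 → ℂ)
    (L₁ T : (E3 × E3) ≃ₗ[ℝ] (E3 × E3))
    (hT : ∀ z : E3 × E3, T z = Rrot (L₁ z))
    (hlower : ∀ z : E3 × E3, (L₁ z).1 = (L₁ (z.1, 0)).1)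
    (a b : E3 →ₗ[ℝ] E3) (hb : Function.Bijective b)
    (hblock : ∀ z : E3 × E3, T.symm z = (z.1 + a z.2, b z.2))
    (x y : E3) :
    convKdelta K (f ∘ T.symm) (T (x, y)) = convKdelta K f (x, y) := by
  unfold convKdelta
  congr 1
  funext x'
  congr 1
  have h1 : T.symm (T (x, y)) = (x, y) := T.symm_apply_apply _
  rw [hblock] at h1
  have hx : (T (x, y)).1 + a (T (x, y)).2 = x := congrArg Prod.fst h1
  have hy : b (T (x, y)).2 = y := congrArg Prod.snd h1
  show f (T.symm ((T (x, y)).1 - x', (T (x, y)).2)) = f (x - x', y)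
  rw [hblock]
  dsimp only
  rw [hy, sub_add_eq_add_sub, hx]
end
end

section
/- Suppose continuous nonnegative functions X, Y on an interval [T_i, T_{i+1}] satisfy X(T) ≤ A + C·X(T)·Y(T) and Y(T) ≤ B·N^{−ε₃} + C·Y(T)² + C·N^{−ε₁}·X(T) for all T, with X(T_i) ≤ A, Y(T_i) ≤ B·N^{−ε₃} at the left endpoint, where A, B, C, ε₁, ε₃ > 0 are constants. Then there exists N₀ (depending only on A, B, C, ε₁, ε₃) such that for N ≥ N₀: X(T) ≤ 2A and Y(T) ≤ 2(B·N^{−ε₃} + C·N^{−ε₁}·2A) for all T ∈ [T_i, T_{i+1}]. -/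
open Set Real

/-! A continuity argument. Put `M = B N^{-ε₃} + 2AC N^{-ε₁}`, which tends to `0` as `N → ∞`, and
take `N₀` so large that `CM ≤ 1/6`. On the set where `X ≤ 2A` and `Y ≤ 2M` the hypotheses give
`Y ≤ M + CY² ≤ M + 2CMY`, hence `Y ≤ 3M/2`, and then `X ≤ A + 3ACM ≤ 3A/2`: the closed bounds
improve to strict ones. The set where they hold is therefore relatively clopen in `[T_i, T_{i+1}]`;
it contains `T_i`, so by connectedness it is the whole interval. -/

theorem IsPreconnected.mapsTo_of_mem_closed_imp_mem_open {α β : Type*} [TopologicalSpace α]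
    [TopologicalSpace β] {s : Set α} {f : α → β} {K U : Set β} (hs : IsPreconnected s)
    (hf : ContinuousOn f s) (hK : IsClosed K) (hU : IsOpen U) (hUK : U ⊆ K)
    (himp : ∀ t ∈ s, f t ∈ K → f t ∈ U) {t₀ : α} (ht₀ : t₀ ∈ s) (h₀ : f t₀ ∈ K) :
    MapsTo f s K := by
  have : PreconnectedSpace s := Subtype.preconnectedSpace hs
  have hfs : Continuous (s.domRestrict f) := continuousOn_iff_continuous_domRestrict.mp hf
  have hclopen : IsClopen {t : s | f t ∈ K} := by
    refine ⟨hK.preimage hfs, ?_⟩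
    have hKU : {t : s | f t ∈ K} = {t : s | f t ∈ U} :=
      Set.ext fun t => ⟨himp t t.2, fun h => hUK h⟩
    exact hKU ▸ hU.preimage hfs
  exact fun t ht => (hclopen.eq_univ ⟨⟨t₀, ht₀⟩, h₀⟩).symm.subset (mem_univ ⟨t, ht⟩)

theorem le_three_halves_mul_of_le_add_mul_sq {C M y : ℝ} (hC : 0 ≤ C) (hCM : C * M ≤ 1 / 6)
    (hy0 : 0 ≤ y) (hy : y ≤ M + C * y ^ 2) (hy2 : y ≤ 2 * M) : y ≤ 3 / 2 * M := by
  have hsq : C * y ^ 2 ≤ 2 * (C * M) * y := by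
    calc C * y ^ 2 = C * y * y := by ring
      _ ≤ C * y * (2 * M) := mul_le_mul_of_nonneg_left hy2 (mul_nonneg hC hy0)
      _ = 2 * (C * M) * y := by ring
  nlinarith

theorem lt_two_mul_of_le_add_mul_mul {A C M x y : ℝ} (hA : 0 < A) (hC : 0 ≤ C)
    (hCM : C * M ≤ 1 / 6) (hx0 : 0 ≤ x) (hx : x ≤ A + C * x * y) (hx2 : x ≤ 2 * A)
    (hy : y ≤ 3 / 2 * M) : x < 2 * A := by
  have hCxy : C * x * y ≤ A / 2 :=
    calc C * x * y ≤ C * x * (3 / 2 * M) := mul_le_mul_of_nonneg_left hy (mul_nonneg hC hx0)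
      _ = 3 / 2 * x * (C * M) := by ring
      _ ≤ 3 / 2 * x * (1 / 6) := by gcongr
      _ ≤ 3 / 2 * (2 * A) * (1 / 6) := by gcongr
      _ = A / 2 := by ring
  linarith

theorem eventually_mul_add_rpow_neg_le {A B C ε₁ ε₃ δ : ℝ} (hε₁ : 0 < ε₁) (hε₃ : 0 < ε₃)
    (hδ : 0 < δ) :
    ∀ᶠ N : ℝ in Filter.atTop, C * (B * N ^ (-ε₃) + C * N ^ (-ε₁) * (2 * A)) ≤ δ := by
  have hlim : Filter.Tendsto (fun N : ℝ => C * (B * N ^ (-ε₃) + C * N ^ (-ε₁) * (2 * A)))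
      Filter.atTop (nhds 0) := by
    simpa using (((tendsto_rpow_neg_atTop hε₃).const_mul B).add
      (((tendsto_rpow_neg_atTop hε₁).const_mul C).mul_const (2 * A))).const_mul C
  exact (hlim.eventually_le_const hδ).mono fun _ h => h

/-- **continuity/bootstrap argument.** If continuous nonnegative `X, Y` on
`[T_i, T_{i+1}]` satisfy `X ≤ A + C·X·Y` and `Y ≤ B·N^{−ε₃} + C·Y² + C·N^{−ε₁}·X`, with
`X(T_i) ≤ A`, `Y(T_i) ≤ B·N^{−ε₃}`, then for `N ≥ N₀` (with `N₀` depending only on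
`A, B, C, ε₁, ε₃`): `X ≤ 2A` and `Y ≤ 2(B·N^{−ε₃} + C·N^{−ε₁}·2A)` throughout. -/
theorem statement18 (A B C ε₁ ε₃ : ℝ)
    (hA : 0 < A) (hB : 0 < B) (hC : 0 < C) (hε₁ : 0 < ε₁) (hε₃ : 0 < ε₃) :
    ∃ N₀ : ℝ, 1 ≤ N₀ ∧
    ∀ N : ℝ, N₀ ≤ N →
    ∀ (Ti Ti1 : ℝ), Ti ≤ Ti1 →
    ∀ X Y : ℝ → ℝ,
      ContinuousOn X (Icc Ti Ti1) → ContinuousOn Y (Icc Ti Ti1) →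
      (∀ T ∈ Icc Ti Ti1, 0 ≤ X T) → (∀ T ∈ Icc Ti Ti1, 0 ≤ Y T) →
      (∀ T ∈ Icc Ti Ti1, X T ≤ A + C * X T * Y T) →
      (∀ T ∈ Icc Ti Ti1, Y T ≤ B * N ^ (-ε₃) + C * (Y T) ^ 2 + C * N ^ (-ε₁) * X T) →
      X Ti ≤ A → Y Ti ≤ B * N ^ (-ε₃) →
      ∀ T ∈ Icc Ti Ti1,
        X T ≤ 2 * A ∧ Y T ≤ 2 * (B * N ^ (-ε₃) + C * N ^ (-ε₁) * (2 * A)) := by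
  obtain ⟨N₀, hN₀⟩ := Filter.eventually_atTop.mp ((Filter.eventually_gt_atTop 0).and
    (eventually_mul_add_rpow_neg_le (A := A) (B := B) (C := C) hε₁ hε₃ (δ := 1 / 6) (by norm_num)))
  refine ⟨max N₀ 1, le_max_right _ _, fun N hN Ti Ti1 hTT X Y hXc hYc hX0 hY0 hX hY hXi hYi => ?_⟩
  obtain ⟨hN, hCM⟩ := hN₀ N (le_of_max_le_left hN)
  set M := B * N ^ (-ε₃) + C * N ^ (-ε₁) * (2 * A)
  have ha : 0 < B * N ^ (-ε₃) := mul_pos hB (rpow_pos_of_pos hN _)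
  have hb : 0 ≤ C * N ^ (-ε₁) := (mul_pos hC (rpow_pos_of_pos hN _)).le
  have hb2A : 0 ≤ C * N ^ (-ε₁) * (2 * A) := mul_nonneg hb (by linarith)
  have hM : 0 < M := add_pos_of_pos_of_nonneg ha hb2A
  have himprove : ∀ T ∈ Icc Ti Ti1, (X T, Y T) ∈ Iic (2 * A) ×ˢ Iic (2 * M) →
      (X T, Y T) ∈ Iio (2 * A) ×ˢ Iio (2 * M) := by
    rintro T hT ⟨hX2 : X T ≤ 2 * A, hY2 : Y T ≤ 2 * M⟩
    have hYM : Y T ≤ M + C * Y T ^ 2 := by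
      have := mul_le_mul_of_nonneg_left hX2 hb
      linarith [hY T hT]
    have hY32 := le_three_halves_mul_of_le_add_mul_sq hC.le hCM (hY0 T hT) hYM hY2
    exact ⟨lt_two_mul_of_le_add_mul_mul hA hC.le hCM (hX0 T hT) (hX T hT) hX2 hY32,
      show Y T < 2 * M by linarith⟩
  have hinit : X Ti ≤ 2 * A ∧ Y Ti ≤ 2 * M :=
    ⟨by linarith, by linarith⟩
  exact isPreconnected_Icc.mapsTo_of_mem_closed_imp_mem_open (hXc.prodMk hYc)
    (isClosed_Iic.prod isClosed_Iic) (isOpen_Iio.prod isOpen_Iio)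
    (prod_mono Iio_subset_Iic_self Iio_subset_Iic_self) himprove (left_mem_Icc.mpr hTT) hinit
end
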